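/- arXiv:1809.05527 — 3 statements merged into one kernel-verified Lean document; each statement's English description precedes it below -/
import Mathlib

section
/- The global minimum value of f on ℝ² equals -4√3/9 ≈ -0.77 (the depth of the deep wells): f(x,y) ≥ -4√3/9 for all (x,y) ∈ ℝ², and equality is attained, for example at the point (x₀, 1) where x₀ = arccos(1/√3)/π. -/
/-- `f (x, y) = sin (π x) · sin (2 π x) · cos (π y) · cos (2 π y)`. -/
noncomputable def f : ℝ × ℝ → ℝ := fun p =>
  Real.sin (Real.pi * p.1) * Real.sin (2 * Real.pi * p.1) *
    Real.cos (Real.pi * p.2) * Real.cos (2 * Real.pi * p.2)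

lemma sqrt3_sq : Real.sqrt 3 * Real.sqrt 3 = 3 :=
  Real.mul_self_sqrt (by norm_num)

lemma sqrt3_pos : (0:ℝ) < Real.sqrt 3 := Real.sqrt_pos.mpr (by norm_num)

lemma abs_g_le (x : ℝ) :
    |Real.sin (Real.pi * x) * Real.sin (2 * Real.pi * x)| ≤ 4 * Real.sqrt 3 / 9 := by
  have h2 : (2:ℝ) * Real.pi * x = 2 * (Real.pi * x) := by ring
  rw [h2, Real.sin_two_mul]
  set s := Real.sin (Real.pi * x)
  set c := Real.cos (Real.pi * x)
  have hsc : s ^ 2 + c ^ 2 = 1 := Real.sin_sq_add_cos_sq _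
  rw [abs_le]
  have hc1 : c ≤ 1 := Real.cos_le_one _
  have hc2 : -1 ≤ c := Real.neg_one_le_cos _
  have hr2 : Real.sqrt 3 ≤ 2 := by nlinarith [sqrt3_sq, sqrt3_pos]
  have h1 : 0 ≤ (Real.sqrt 3 * c - 1) ^ 2 * (Real.sqrt 3 * c + 2) :=
    mul_nonneg (sq_nonneg _) (by nlinarith [sqrt3_pos])
  have h2 : 0 ≤ (Real.sqrt 3 * c + 1) ^ 2 * (2 - Real.sqrt 3 * c) :=
    mul_nonneg (sq_nonneg _) (by nlinarith [sqrt3_pos])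
  have hs : s ^ 2 = 1 - c ^ 2 := by linarith
  have hgoal : s * (2 * s * c) = 2 * (1 - c ^ 2) * c := by linear_combination 2 * c * hs
  have e1 : 3 * Real.sqrt 3 * (4 * Real.sqrt 3 / 9 - 2 * (1 - c ^ 2) * c)
      = 2 * ((Real.sqrt 3 * c - 1) ^ 2 * (Real.sqrt 3 * c + 2)) := by
    linear_combination (4 / 3 - 2 * Real.sqrt 3 * c ^ 3) * sqrt3_sq
  have e2 : 3 * Real.sqrt 3 * (2 * (1 - c ^ 2) * c + 4 * Real.sqrt 3 / 9)
      = 2 * ((Real.sqrt 3 * c + 1) ^ 2 * (2 - Real.sqrt 3 * c)) := by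
    linear_combination (4 / 3 + 2 * Real.sqrt 3 * c ^ 3) * sqrt3_sq
  rw [hgoal]
  constructor <;> nlinarith [h1, h2, e1, e2, sqrt3_pos]

/-- The global minimum value of `f` is `-4 √3 / 9`, attained e.g. at
`(arccos (1/√3) / π, 1)`. -/
theorem f_global_min :
    (∀ x y : ℝ, f (x, y) ≥ -(4 * Real.sqrt 3 / 9)) ∧
      f (Real.arccos (1 / Real.sqrt 3) / Real.pi, 1) = -(4 * Real.sqrt 3 / 9) := by
  constructor
  · intro x y
    have hg := abs_g_le x
    have hcy : |Real.cos (Real.pi * y)| ≤ 1 := Real.abs_cos_le_one _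
    have hcy2 : |Real.cos (2 * Real.pi * y)| ≤ 1 := Real.abs_cos_le_one _
    have habs : |f (x, y)| ≤ 4 * Real.sqrt 3 / 9 := by
      have h : |f (x, y)| = |Real.sin (Real.pi * x) * Real.sin (2 * Real.pi * x)| *
          |Real.cos (Real.pi * y)| * |Real.cos (2 * Real.pi * y)| := by
        simp only [f]; rw [abs_mul, abs_mul]
      rw [h]
      calc |Real.sin (Real.pi * x) * Real.sin (2 * Real.pi * x)| *
            |Real.cos (Real.pi * y)| * |Real.cos (2 * Real.pi * y)|
          ≤ (4 * Real.sqrt 3 / 9) * 1 * 1 := by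
            gcongr <;> positivity
        _ = 4 * Real.sqrt 3 / 9 := by ring
    linarith [neg_abs_le (f (x, y)), (abs_le.mp habs).1]
  · have hπ : Real.pi ≠ 0 := Real.pi_ne_zero
    set a := Real.arccos (1 / Real.sqrt 3) with ha
    have hx : Real.pi * (a / Real.pi) = a := by field_simp
    have h2x : 2 * Real.pi * (a / Real.pi) = 2 * a := by field_simp
    have h1 : (1:ℝ) / Real.sqrt 3 ≤ 1 := by
      rw [div_le_one sqrt3_pos]
      nlinarith [sqrt3_sq, sqrt3_pos]
    have hm1 : (-1:ℝ) ≤ 1 / Real.sqrt 3 := by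
      have : (0:ℝ) ≤ 1 / Real.sqrt 3 := by positivity
      linarith
    have hc : Real.cos a = 1 / Real.sqrt 3 := Real.cos_arccos hm1 h1
    have hsc : Real.sin a ^ 2 + Real.cos a ^ 2 = 1 := Real.sin_sq_add_cos_sq a
    have hs2 : Real.sin a ^ 2 = 2 / 3 := by
      rw [hc] at hsc
      have h3 : (1 / Real.sqrt 3) ^ 2 = 1 / 3 := by
        rw [div_pow, one_pow, sq, sqrt3_sq]
      linarith [hsc, h3 ▸ hsc]
    simp only [f, hx, h2x, mul_one, Real.cos_pi, Real.cos_two_pi,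
      Real.sin_two_mul, hc]
    have h9 : (Real.sqrt 3) ≠ 0 := ne_of_gt sqrt3_pos
    field_simp
    nlinarith [hs2, sqrt3_sq]
end

section
/- The point (x₀, y₀) with x₀ = arccos(1/√3)/π and y₀ = arccos(1/√6)/π is a strict local minimum point of f, and the value of f there equals -4√2/27 ≈ -0.21 (the depth of the shallow wells). -/
/-!
With `c = cos (π x)` and `d = cos (π y)` the function factors as
`f (x, y) = sinPoly c * cosPoly d`, where `sinPoly c = 2 c (1 - c²)` and `cosPoly d = d (2 d² - 1)`.
On the square `(0, 1/2)²` both `c` and `d` lie in `(0, 1)`, where `sinPoly > 0` attains its maximum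
only at `c = 1/√3` and `cosPoly` attains its (negative) minimum only at `d = 1/√6`: this is read off
the factorizations `sinPoly a - sinPoly c = 2 (c - a)² (c + 2a)` and
`cosPoly d - cosPoly b = 2 (d - b)² (d + 2b)`, valid when `3a² = 1` and `6b² = 1`.
A positive factor that is at most its maximum times a negative factor that is at least its minimum
is at least the product of the extremes, with equality only at the extremes.
-/

open Real Set Topology

def sinPoly (c : ℝ) : ℝ := 2 * (1 - c ^ 2) * c

def cosPoly (c : ℝ) : ℝ := (2 * c ^ 2 - 1) * c

lemma sin_mul_sin_two_mul (θ : ℝ) : sin θ * sin (2 * θ) = sinPoly (cos θ) := by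
  rw [sin_two_mul, sinPoly, ← sin_sq]
  ring

lemma cos_mul_cos_two_mul (θ : ℝ) : cos θ * cos (2 * θ) = cosPoly (cos θ) := by
  rw [cos_two_mul, cosPoly]
  ring

lemma f_eq_sinPoly_mul_cosPoly (x y : ℝ) :
    f (x, y) = sinPoly (cos (π * x)) * cosPoly (cos (π * y)) := by
  rw [← sin_mul_sin_two_mul, ← cos_mul_cos_two_mul, f, mul_assoc 2 π x, mul_assoc 2 π y]
  ring

lemma sinPoly_sub_sinPoly {a : ℝ} (ha : 3 * a ^ 2 = 1) (c : ℝ) :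
    sinPoly a - sinPoly c = 2 * (c - a) ^ 2 * (c + 2 * a) := by
  unfold sinPoly
  linear_combination (2 * (c - a)) * ha

lemma cosPoly_sub_cosPoly {b : ℝ} (hb : 6 * b ^ 2 = 1) (d : ℝ) :
    cosPoly d - cosPoly b = 2 * (d - b) ^ 2 * (d + 2 * b) := by
  unfold cosPoly
  linear_combination (d - b) * hb

lemma sinPoly_pos {c : ℝ} (hc : c ∈ Ioo 0 1) : 0 < sinPoly c := by
  have : 0 < 1 - c ^ 2 := by nlinarith [hc.1, hc.2]
  unfold sinPoly
  exact mul_pos (by positivity) hc.1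

lemma cosPoly_neg {b : ℝ} (hb : 6 * b ^ 2 = 1) (hb0 : 0 < b) : cosPoly b < 0 := by
  unfold cosPoly
  nlinarith

lemma mul_lt_mul_of_le_of_le_of_neg {p p₀ q q₀ : ℝ} (hp : 0 < p) (hq₀ : q₀ < 0)
    (hpp : p ≤ p₀) (hqq : q₀ ≤ q) (h : p < p₀ ∨ q₀ < q) : p₀ * q₀ < p * q := by
  rcases h with h | h
  · calc p₀ * q₀ < p * q₀ := mul_lt_mul_of_neg_right h hq₀
      _ ≤ p * q := mul_le_mul_of_nonneg_left hqq hp.le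
  · calc p₀ * q₀ ≤ p * q₀ := mul_le_mul_of_nonpos_right hpp hq₀.le
      _ < p * q := mul_lt_mul_of_pos_left h hp

lemma sinPoly_mul_cosPoly_lt {a b c d : ℝ} (ha : 3 * a ^ 2 = 1) (ha0 : 0 < a)
    (hb : 6 * b ^ 2 = 1) (hb0 : 0 < b) (hc : c ∈ Ioo 0 1) (hd : 0 < d) (hne : (c, d) ≠ (a, b)) :
    sinPoly a * cosPoly b < sinPoly c * cosPoly d := by
  have hca := sinPoly_sub_sinPoly ha c
  have hdb := cosPoly_sub_cosPoly hb d
  have hc2a : 0 < c + 2 * a := by linarith [hc.1]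
  have hd2b : 0 < d + 2 * b := by linarith
  refine mul_lt_mul_of_le_of_le_of_neg (sinPoly_pos hc) (cosPoly_neg hb hb0) ?_ ?_ ?_
  · rw [← sub_nonneg, hca]
    exact mul_nonneg (by positivity) hc2a.le
  · rw [← sub_nonneg, hdb]
    exact mul_nonneg (by positivity) hd2b.le
  · rw [← sub_pos (a := sinPoly a), ← sub_pos (b := cosPoly b), hca, hdb]
    by_cases h : c = a
    · have hdb_ne : d ≠ b := fun h' => hne (by rw [h, h'])
      exact Or.inr (mul_pos (mul_pos two_pos (sq_pos_of_ne_zero (sub_ne_zero.2 hdb_ne))) hd2b)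
    · exact Or.inl (mul_pos (mul_pos two_pos (sq_pos_of_ne_zero (sub_ne_zero.2 h))) hc2a)

lemma sinPoly_mul_cosPoly_one_div_sqrt : sinPoly (1 / √3) * cosPoly (1 / √6) = -(4 * √2 / 27) := by
  have h3 : √3 ^ 2 = 3 := sq_sqrt (by norm_num)
  have h2 : √2 ^ 2 = 2 := sq_sqrt (by norm_num)
  have h6 : √6 = √3 * √2 := by rw [← sqrt_mul (by norm_num)]; norm_num
  unfold sinPoly cosPoly
  rw [h6]
  field_simp
  rw [show √3 ^ 6 = (√3 ^ 2) ^ 3 by ring, show √2 ^ 4 = (√2 ^ 2) ^ 2 by ring, h3, h2]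
  norm_num

lemma cos_pi_mul_mem_Ioo {x : ℝ} (hx : x ∈ Ioo (0 : ℝ) (1 / 2)) : cos (π * x) ∈ Ioo 0 1 := by
  have := pi_pos
  refine ⟨cos_pos_of_mem_Ioo ⟨by nlinarith [hx.1], by nlinarith [hx.2]⟩, ?_⟩
  simpa using cos_lt_cos_of_nonneg_of_le_pi le_rfl (by nlinarith [hx.2]) (by nlinarith [hx.1])

lemma cos_pi_mul_arccos_div_pi {a : ℝ} (h₁ : -1 ≤ a) (h₂ : a ≤ 1) :
    cos (π * (arccos a / π)) = a := by
  rw [mul_div_cancel₀ _ pi_ne_zero, cos_arccos h₁ h₂]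

lemma arccos_cos_pi_mul_div_pi {x : ℝ} (hx : x ∈ Icc (0 : ℝ) 1) :
    arccos (cos (π * x)) / π = x := by
  have := pi_pos
  rw [arccos_cos (by nlinarith [hx.1]) (by nlinarith [hx.2]), mul_div_cancel_left₀ _ pi_ne_zero]

lemma arccos_div_pi_mem_Ioo {a : ℝ} (h₀ : 0 < a) (h₁ : a < 1) :
    arccos a / π ∈ Ioo (0 : ℝ) (1 / 2) := by
  refine ⟨div_pos (arccos_pos.2 h₁) pi_pos, ?_⟩
  rw [div_lt_iff₀ pi_pos]
  linarith [arccos_lt_pi_div_two.2 h₀]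

/-- The point `(arccos (1/√3) / π, arccos (1/√6) / π)` is a strict local minimum
point of `f`, with value `-4 √2 / 27` (the depth of the shallow wells). -/
theorem f_strict_local_min :
    (∀ᶠ q in nhdsWithin
        (Real.arccos (1 / Real.sqrt 3) / Real.pi, Real.arccos (1 / Real.sqrt 6) / Real.pi)
        {(Real.arccos (1 / Real.sqrt 3) / Real.pi, Real.arccos (1 / Real.sqrt 6) / Real.pi)}ᶜ,
      f (Real.arccos (1 / Real.sqrt 3) / Real.pi, Real.arccos (1 / Real.sqrt 6) / Real.pi) < f q) ∧
    f (Real.arccos (1 / Real.sqrt 3) / Real.pi, Real.arccos (1 / Real.sqrt 6) / Real.pi) =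
      -(4 * Real.sqrt 2 / 27) := by
  set a : ℝ := 1 / √3
  set b : ℝ := 1 / √6
  have ha : 3 * a ^ 2 = 1 := by simp [a]
  have hb : 6 * b ^ 2 = 1 := by simp [b]
  have ha₀ : 0 < a := by positivity
  have hb₀ : 0 < b := by positivity
  have ha₁ : a < 1 := by nlinarith
  have hb₁ : b < 1 := by nlinarith
  have hf₀ : f (arccos a / π, arccos b / π) = sinPoly a * cosPoly b := by
    rw [f_eq_sinPoly_mul_cosPoly, cos_pi_mul_arccos_div_pi, cos_pi_mul_arccos_div_pi] <;> linarith
  refine ⟨?_, hf₀.trans sinPoly_mul_cosPoly_one_div_sqrt⟩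
  have hU : Ioo (0 : ℝ) (1 / 2) ×ˢ Ioo (0 : ℝ) (1 / 2) ∈ 𝓝 (arccos a / π, arccos b / π) :=
    (isOpen_Ioo.prod isOpen_Ioo).mem_nhds
      ⟨arccos_div_pi_mem_Ioo ha₀ ha₁, arccos_div_pi_mem_Ioo hb₀ hb₁⟩
  have hIcc : Ioo (0 : ℝ) (1 / 2) ⊆ Icc 0 1 :=
    Ioo_subset_Icc_self.trans (Icc_subset_Icc_right (by norm_num))
  filter_upwards [self_mem_nhdsWithin, mem_nhdsWithin_of_mem_nhds hU] with ⟨x, y⟩ hne ⟨hx, hy⟩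
  rw [hf₀, f_eq_sinPoly_mul_cosPoly]
  refine sinPoly_mul_cosPoly_lt ha ha₀ hb hb₀ (cos_pi_mul_mem_Ioo hx) (cos_pi_mul_mem_Ioo hy).1 ?_
  rintro h
  obtain ⟨hxa, hyb⟩ := Prod.mk.inj h
  apply hne
  rw [← hxa, ← hyb, arccos_cos_pi_mul_div_pi (hIcc hx), arccos_cos_pi_mul_div_pi (hIcc hy)]
  rfl
end

section
/- The function f has a strict local minimum that is not a global minimum: there exists a point p ∈ ℝ² that is a strict local minimum point of f with f(p) = -4√2/27, while the infimum of f over ℝ² equals -4√3/9, and -4√3/9 < -4√2/27. Hence f has wells of two distinct depths. -/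
lemma f_eq (x y : ℝ) :
    f (x, y) = (2 * Real.cos (Real.pi * x) - 2 * Real.cos (Real.pi * x) ^ 3) *
      (2 * Real.cos (Real.pi * y) ^ 3 - Real.cos (Real.pi * y)) := by
  have hx : Real.sin (2 * Real.pi * x) = 2 * Real.sin (Real.pi * x) * Real.cos (Real.pi * x) := by
    rw [show 2 * Real.pi * x = 2 * (Real.pi * x) by ring, Real.sin_two_mul]
  have hy : Real.cos (2 * Real.pi * y) = 2 * Real.cos (Real.pi * y) ^ 2 - 1 := by
    rw [show 2 * Real.pi * y = 2 * (Real.pi * y) by ring, Real.cos_two_mul]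
  have hs : Real.sin (Real.pi * x) ^ 2 = 1 - Real.cos (Real.pi * x) ^ 2 := Real.sin_sq _
  simp only [f]
  rw [hx, hy]
  linear_combination (2 * Real.cos (Real.pi * x) * Real.cos (Real.pi * y) *
    (2 * Real.cos (Real.pi * y) ^ 2 - 1)) * hs

lemma keyA {u : ℝ} (h : u ^ 2 ≤ 1) : (2 * u - 2 * u ^ 3) ^ 2 ≤ 16 / 27 := by
  nlinarith [mul_nonneg (sq_nonneg (u ^ 2 - 1/3)) (show (0:ℝ) ≤ 4/3 - u ^ 2 by linarith)]

lemma keyB {v : ℝ} (h : v ^ 2 ≤ 1) : (2 * v ^ 3 - v) ^ 2 ≤ 1 := by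
  nlinarith [mul_nonneg (show (0:ℝ) ≤ 1 - v ^ 2 by linarith)
    (show (0:ℝ) ≤ 4 * v ^ 4 + 1 by positivity)]

lemma keyAB {s A B : ℝ} (hs : s ^ 2 = 3) (hsp : 0 < s)
    (hA : A ^ 2 ≤ 16 / 27) (hB : B ^ 2 ≤ 1) : -(4 * s / 9) ≤ A * B := by
  have hAB : (A * B) ^ 2 ≤ 16 / 27 := by
    have h1 : A ^ 2 * B ^ 2 ≤ (16 / 27) * B ^ 2 :=
      mul_le_mul_of_nonneg_right hA (sq_nonneg _)
    nlinarith [sq_nonneg B]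
  by_contra hcon
  push_neg at hcon
  have h4 : 0 < 4 * s / 9 := by positivity
  have h5 : 4 * s / 9 < -(A * B) := by linarith
  have h6 : (4 * s / 9) ^ 2 < (-(A * B)) ^ 2 := by
    exact pow_lt_pow_left₀ h5 h4.le (by norm_num)
  rw [neg_sq] at h6
  have h7 : (4 * s / 9) ^ 2 = 16 / 27 := by linear_combination (16 / 81) * hs
  linarith

/-- `f` has a strict local minimum with value `-4 √2 / 27` that is not a global
minimum: the infimum of `f` over `ℝ²` is `-4 √3 / 9 < -4 √2 / 27`.
Hence `f` has wells of two distinct depths. -/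
theorem f_two_depths :
    (∃ p : ℝ × ℝ, (∀ᶠ q in nhdsWithin p {p}ᶜ, f p < f q) ∧ f p = -(4 * Real.sqrt 2 / 27)) ∧
      (⨅ p : ℝ × ℝ, f p) = -(4 * Real.sqrt 3 / 9) ∧
      -(4 * Real.sqrt 3 / 9) < -(4 * Real.sqrt 2 / 27) := by
  have h2 : Real.sqrt 2 ^ 2 = 2 := Real.sq_sqrt (by norm_num)
  have h3 : Real.sqrt 3 ^ 2 = 3 := Real.sq_sqrt (by norm_num)
  have h6 : Real.sqrt 6 ^ 2 = 6 := Real.sq_sqrt (by norm_num)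
  have h2p : 0 < Real.sqrt 2 := Real.sqrt_pos.mpr (by norm_num)
  have h3p : 0 < Real.sqrt 3 := Real.sqrt_pos.mpr (by norm_num)
  have h6p : 0 < Real.sqrt 6 := Real.sqrt_pos.mpr (by norm_num)
  have h63 : Real.sqrt 6 = Real.sqrt 2 * Real.sqrt 3 := by
    rw [← Real.sqrt_mul (by norm_num : (0:ℝ) ≤ 2) 3]; norm_num
  have hπ : 0 < Real.pi := Real.pi_pos
  set u0 : ℝ := Real.sqrt 3 / 3 with hu0def
  set v0 : ℝ := Real.sqrt 6 / 6 with hv0def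
  have hu0pos : 0 < u0 := by positivity
  have hv0pos : 0 < v0 := by positivity
  have hu0lt : u0 < 1 := by rw [hu0def]; nlinarith [h3, h3p]
  have hv0lt : v0 < 1 := by rw [hv0def]; nlinarith [h6, h6p]
  have hu0sq : u0 ^ 2 = 1 / 3 := by rw [hu0def, div_pow, h3]; norm_num
  have hv0sq : v0 ^ 2 = 1 / 6 := by rw [hv0def, div_pow, h6]; norm_num
  set x0 : ℝ := Real.arccos u0 / Real.pi with hx0def
  set y0 : ℝ := Real.arccos v0 / Real.pi with hy0def
  have hcx0 : Real.cos (Real.pi * x0) = u0 := by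
    rw [show Real.pi * x0 = Real.arccos u0 by rw [hx0def]; field_simp]
    exact Real.cos_arccos (by linarith) hu0lt.le
  have hcy0 : Real.cos (Real.pi * y0) = v0 := by
    rw [show Real.pi * y0 = Real.arccos v0 by rw [hy0def]; field_simp]
    exact Real.cos_arccos (by linarith) hv0lt.le
  have hx0mem : x0 ∈ Set.Ioo (0:ℝ) (1/2) := by
    have h1 : 0 < Real.arccos u0 := Real.arccos_pos.mpr hu0lt
    have h2' : Real.arccos u0 < Real.pi / 2 := Real.arccos_lt_pi_div_two.mpr hu0pos
    exact ⟨by positivity, by rw [hx0def, div_lt_iff₀ hπ]; linarith⟩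
  have hy0mem : y0 ∈ Set.Ioo (0:ℝ) (1/2) := by
    have h1 : 0 < Real.arccos v0 := Real.arccos_pos.mpr hv0lt
    have h2' : Real.arccos v0 < Real.pi / 2 := Real.arccos_lt_pi_div_two.mpr hv0pos
    exact ⟨by positivity, by rw [hy0def, div_lt_iff₀ hπ]; linarith⟩
  have hA0 : 2 * u0 - 2 * u0 ^ 3 = 4 * Real.sqrt 3 / 9 := by
    rw [hu0def]; linear_combination (-(2 * Real.sqrt 3) / 27) * h3
  have hB0 : 2 * v0 ^ 3 - v0 = -(Real.sqrt 6 / 9) := by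
    rw [hv0def]; linear_combination (Real.sqrt 6 / 108) * h6
  have hprod : (4 * Real.sqrt 3 / 9) * (-(Real.sqrt 6 / 9)) = -(4 * Real.sqrt 2 / 27) := by
    rw [h63]; linear_combination (-(4 * Real.sqrt 2) / 81) * h3
  have hval : f (x0, y0) = -(4 * Real.sqrt 2 / 27) := by
    rw [f_eq, hcx0, hcy0, hA0, hB0, hprod]
  -- injectivity of x ↦ cos (π x) on (0, 1/2)
  have hinj : ∀ a b : ℝ, a ∈ Set.Ioo (0:ℝ) (1/2) → b ∈ Set.Ioo (0:ℝ) (1/2) →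
      Real.cos (Real.pi * a) = Real.cos (Real.pi * b) → a = b := by
    intro a b ha hb h
    have hb1 : Real.pi * a ≤ Real.pi := by
      have := mul_le_mul_of_nonneg_left (le_of_lt ha.2) hπ.le
      linarith
    have hb2 : Real.pi * b ≤ Real.pi := by
      have := mul_le_mul_of_nonneg_left (le_of_lt hb.2) hπ.le
      linarith
    have h1 : Real.pi * a = Real.pi * b :=
      Real.injOn_cos ⟨(mul_nonneg hπ.le ha.1.le), hb1⟩ ⟨(mul_nonneg hπ.le hb.1.le), hb2⟩ h
    exact mul_left_cancel₀ hπ.ne' h1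
  -- global lower bound
  have hlow : ∀ q : ℝ × ℝ, -(4 * Real.sqrt 3 / 9) ≤ f q := by
    rintro ⟨x, y⟩
    rw [f_eq]
    have hu1 : Real.cos (Real.pi * x) ^ 2 ≤ 1 := Real.cos_sq_le_one _
    have hv1 : Real.cos (Real.pi * y) ^ 2 ≤ 1 := Real.cos_sq_le_one _
    exact keyAB h3 h3p (keyA hu1) (keyB hv1)
  -- the infimum is attained at (x0, 1)
  have hq0 : f (x0, 1) = -(4 * Real.sqrt 3 / 9) := by
    rw [f_eq, hcx0, mul_one, Real.cos_pi, hA0]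
    ring
  have hbdd : BddBelow (Set.range f) := ⟨-(4 * Real.sqrt 3 / 9), by
    rintro _ ⟨q, rfl⟩; exact hlow q⟩
  have hlt : -(4 * Real.sqrt 3 / 9) < -(4 * Real.sqrt 2 / 27) := by
    nlinarith [h2, h3, h2p, h3p]
  refine ⟨⟨(x0, y0), ?_, hval⟩, le_antisymm ((ciInf_le hbdd (x0, 1)).trans hq0.le)
    (le_ciInf hlow), hlt⟩
  -- strict local minimum
  rw [eventually_nhdsWithin_iff]
  have hS : (Set.Ioo (0:ℝ) (1/2) ×ˢ Set.Ioo (0:ℝ) (1/2)) ∈ nhds ((x0, y0) : ℝ × ℝ) :=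
    (isOpen_Ioo.prod isOpen_Ioo).mem_nhds ⟨hx0mem, hy0mem⟩
  filter_upwards [hS] with q hq hne
  have hne' : q ≠ (x0, y0) := by simpa using hne
  have hq1 : q.1 ∈ Set.Ioo (0:ℝ) (1/2) := hq.1
  have hq2 : q.2 ∈ Set.Ioo (0:ℝ) (1/2) := hq.2
  set u := Real.cos (Real.pi * q.1) with hu
  set v := Real.cos (Real.pi * q.2) with hv
  have hupos : 0 < u := by
    apply Real.cos_pos_of_mem_Ioo
    constructor
    · have : 0 < Real.pi * q.1 := mul_pos hπ hq1.1
      linarith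
    · have := mul_lt_mul_of_pos_left hq1.2 hπ
      linarith
  have hvpos : 0 < v := by
    apply Real.cos_pos_of_mem_Ioo
    constructor
    · have : 0 < Real.pi * q.2 := mul_pos hπ hq2.1
      linarith
    · have := mul_lt_mul_of_pos_left hq2.2 hπ
      linarith
  have hule : u ≤ 1 := Real.cos_le_one _
  have hfq : f q = (2 * u - 2 * u ^ 3) * (2 * v ^ 3 - v) := f_eq q.1 q.2
  rw [hval, hfq]
  have hApos : 0 ≤ 2 * u - 2 * u ^ 3 := by
    have h1 : 0 ≤ u * (1 - u) * (1 + u) :=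
      mul_nonneg (mul_nonneg hupos.le (by linarith)) (by linarith)
    have h2' : 2 * u - 2 * u ^ 3 = 2 * (u * (1 - u) * (1 + u)) := by ring
    linarith
  have hBB0 : 2 * v ^ 3 - v - (-(Real.sqrt 6 / 9)) = 2 * (v - v0) ^ 2 * (v + 2 * v0) := by
    have h6v : Real.sqrt 6 = 6 * v0 := by rw [hv0def]; ring
    rw [h6v]; linear_combination (6 * v - 4 * v0) * hv0sq
  have hAA0 : 4 * Real.sqrt 3 / 9 - (2 * u - 2 * u ^ 3) = 2 * (u - u0) ^ 2 * (u + 2 * u0) := by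
    have h3u : Real.sqrt 3 = 3 * u0 := by rw [hu0def]; ring
    rw [h3u]; linear_combination (6 * u - 4 * u0) * hu0sq
  have hBge : -(Real.sqrt 6 / 9) ≤ 2 * v ^ 3 - v := by
    have h1 : 0 ≤ 2 * (v - v0) ^ 2 * (v + 2 * v0) :=
      mul_nonneg (mul_nonneg (by norm_num) (sq_nonneg _)) (by linarith)
    linarith
  by_cases hx : q.1 = x0
  · have hy : q.2 ≠ y0 := fun h => hne' (Prod.ext hx h)
    have hvne : v ≠ v0 := by
      intro h
      exact hy (hinj q.2 y0 hq2 hy0mem (by rw [← hv, h, hcy0]))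
    have hueq : u = u0 := by rw [hu, hx, hcx0]
    have hBgt : -(Real.sqrt 6 / 9) < 2 * v ^ 3 - v := by
      have h1 : 0 < 2 * (v - v0) ^ 2 * (v + 2 * v0) :=
        mul_pos (mul_pos (by norm_num) (pow_two_pos_of_ne_zero (sub_ne_zero_of_ne hvne)))
          (by linarith)
      linarith
    have hAeq : 2 * u - 2 * u ^ 3 = 4 * Real.sqrt 3 / 9 := by rw [hueq]; exact hA0
    rw [hAeq]
    calc -(4 * Real.sqrt 2 / 27) = (4 * Real.sqrt 3 / 9) * (-(Real.sqrt 6 / 9)) := hprod.symm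
      _ < (4 * Real.sqrt 3 / 9) * (2 * v ^ 3 - v) := by
          apply mul_lt_mul_of_pos_left hBgt; positivity
  · have hune : u ≠ u0 := by
      intro h
      exact hx (hinj q.1 x0 hq1 hx0mem (by rw [← hu, h, hcx0]))
    have hAlt : 2 * u - 2 * u ^ 3 < 4 * Real.sqrt 3 / 9 := by
      have h1 : 0 < 2 * (u - u0) ^ 2 * (u + 2 * u0) :=
        mul_pos (mul_pos (by norm_num) (pow_two_pos_of_ne_zero (sub_ne_zero_of_ne hune)))
          (by linarith)
      linarith
    have hB0neg : (-(Real.sqrt 6 / 9)) < 0 := by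
      simp only [neg_neg, neg_lt, neg_zero]; positivity
    have step1 : (4 * Real.sqrt 3 / 9) * (-(Real.sqrt 6 / 9)) <
        (2 * u - 2 * u ^ 3) * (-(Real.sqrt 6 / 9)) :=
      mul_lt_mul_of_neg_right hAlt hB0neg
    have step2 : (2 * u - 2 * u ^ 3) * (-(Real.sqrt 6 / 9)) ≤
        (2 * u - 2 * u ^ 3) * (2 * v ^ 3 - v) :=
      mul_le_mul_of_nonneg_left hBge hApos
    linarith [hprod]
end
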